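/- Let ν₀ be the measure on [-π/2,π/2]² supported on the diagonal y = -x with density cos x · δ(x + y), and for 0 < λ ≤ 1 let c(x,y,λ) be the vector (3/4)·((λ sin x + sin ζ)³/sin ζ)·cos((x-y)/2)·(cos(ζ + (x-y)/2), -sin(ζ + (x-y)/2)) with ζ = ζ(x,λ) = arcsin(√(1-λ²cos²x)). Then ∫∫ c(x,y,λ) dν₀(x,y) = (0, -1); i.e., R_T[ν₀, λ] = 0 and R_L[ν₀, λ] = -1. -/

import Mathlib

/-
Along the diagonal `y = -x` one has `(x - y)/2 = x`, `sin ζ = √(1 - λ² cos² x)` and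
`cos ζ = λ cos x`, so both components of `c` times the density `cos x` become explicit functions
of `x` with the common factor `u³ / sin ζ`, where `u = λ sin x + sin ζ`. Since
`u' = λ cos x · u / sin ζ` they have elementary primitives, `u³ cos³ x / 4` and
`sin³ x · u³ / 4 - 3 u⁴ / (16 λ)`, and the result follows by evaluating them at `± π/2`, where
`u = 1 ± λ`. For `λ = 1`, `sin ζ = |sin x|` vanishes at `x = 0`; there the primitives fail to be
differentiable, which the fundamental theorem of calculus tolerates off a countable set, and
`u³ / sin ζ` stays bounded by `8` because `|λ sin x| ≤ sin ζ`.
-/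

open Real MeasureTheory

noncomputable def gammaM : Measure ℝ :=
  (volume.restrict (Set.Icc (-(π/2)) (π/2))).withDensity
    (fun φ => ENNReal.ofReal (Real.cos φ))

noncomputable def nuZero : Measure (ℝ × ℝ) :=
  gammaM.map (fun x => (x, -x))

noncomputable def zeta (x lam : ℝ) : ℝ :=
  Real.arcsin (Real.sqrt (1 - lam^2 * Real.cos x ^ 2))

/-- transversal component of the cost `c(x,y,λ)` for `0 < λ ≤ 1`. -/
noncomputable def cT (lam : ℝ) (p : ℝ × ℝ) : ℝ :=
  (3/4) * ((lam * Real.sin p.1 + Real.sin (zeta p.1 lam))^3 / Real.sin (zeta p.1 lam)) *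
    Real.cos ((p.1 - p.2)/2) * Real.cos (zeta p.1 lam + (p.1 - p.2)/2)

/-- longitudinal component of the cost `c(x,y,λ)` for `0 < λ ≤ 1`. -/
noncomputable def cL (lam : ℝ) (p : ℝ × ℝ) : ℝ :=
  -((3/4) * ((lam * Real.sin p.1 + Real.sin (zeta p.1 lam))^3 / Real.sin (zeta p.1 lam)) *
    Real.cos ((p.1 - p.2)/2) * Real.sin (zeta p.1 lam + (p.1 - p.2)/2))

open Set intervalIntegral
open scoped ENNReal

lemma integral_nuZero (F : ℝ × ℝ → ℝ) :
    ∫ p, F p ∂nuZero = ∫ x in -(π/2)..π/2, cos x * F (x, -x) := by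
  have hemb : MeasurableEmbedding (fun x : ℝ => (x, -x)) := by
    refine .of_measurable_inverse (by fun_prop) ?_ measurable_fst (fun _ => rfl)
    have : range (fun x : ℝ => (x, -x)) = {p | p.2 = -p.1} := by
      ext ⟨a, b⟩; simp [eq_comm]
    rw [this]
    exact measurableSet_eq_fun measurable_snd measurable_fst.neg
  rw [nuZero, hemb.integral_map, gammaM,
    show (fun φ => ENNReal.ofReal (cos φ)) = (fun φ => ((cos φ).toNNReal : ℝ≥0∞)) from rfl,
    integral_withDensity_eq_integral_smul (by fun_prop),
    integral_of_le (by linarith [pi_pos]), ← integral_Icc_eq_integral_Ioc]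
  refine setIntegral_congr_fun measurableSet_Icc fun x hx => ?_
  simp [NNReal.smul_def, coe_toNNReal _ (cos_nonneg_of_mem_Icc hx)]

noncomputable def sinZeta (lam x : ℝ) : ℝ := √(1 - lam ^ 2 * cos x ^ 2)

noncomputable def sinSum (lam x : ℝ) : ℝ := lam * sin x + sinZeta lam x

noncomputable def costFactor (lam x : ℝ) : ℝ := sinSum lam x ^ 3 / sinZeta lam x

lemma sin_zeta (x lam : ℝ) : sin (zeta x lam) = sinZeta lam x :=
  sin_arcsin (by linarith [sqrt_nonneg (1 - lam ^ 2 * cos x ^ 2)])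
    (sqrt_le_one.mpr (by nlinarith [sq_nonneg (lam * cos x)]))

lemma cos_zeta {x lam : ℝ} (h₀ : 0 ≤ lam * cos x) (h₁ : lam * cos x ≤ 1) :
    cos (zeta x lam) = lam * cos x := by
  rw [zeta, cos_arcsin, sq_sqrt (by nlinarith),
    show 1 - (1 - lam ^ 2 * cos x ^ 2) = (lam * cos x) ^ 2 by ring, sqrt_sq h₀]

lemma cos_mul_cT_diag {x lam : ℝ} (h₀ : 0 ≤ lam * cos x) (h₁ : lam * cos x ≤ 1) :
    cos x * cT lam (x, -x) =
      costFactor lam x * (3 / 4 * cos x ^ 2 * (lam * cos x ^ 2 - sinZeta lam x * sin x)) := by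
  rw [cT, costFactor, sinSum, show (x - -x) / 2 = x by ring, cos_add, sin_zeta, cos_zeta h₀ h₁]
  ring

lemma cos_mul_cL_diag {x lam : ℝ} (h₀ : 0 ≤ lam * cos x) (h₁ : lam * cos x ≤ 1) :
    cos x * cL lam (x, -x) = costFactor lam x * (-(3 / 4) * cos x ^ 3 * sinSum lam x) := by
  rw [cL, costFactor, sinSum, show (x - -x) / 2 = x by ring, sin_add, sin_zeta, cos_zeta h₀ h₁]
  ring

lemma sinZeta_ne_zero {lam x : ℝ} (hlam : lam ^ 2 ≤ 1) (hx : sin x ≠ 0) : sinZeta lam x ≠ 0 :=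
  sqrt_ne_zero'.2 (by nlinarith [sin_sq_add_cos_sq x, sq_pos_of_ne_zero hx, sq_nonneg (cos x)])

lemma sinZeta_nonneg (lam x : ℝ) : 0 ≤ sinZeta lam x :=
  sqrt_nonneg _

lemma sinZeta_le_one (lam x : ℝ) : sinZeta lam x ≤ 1 :=
  sqrt_le_one.mpr (by nlinarith [sq_nonneg (lam * cos x)])

lemma abs_mul_sin_le_sinZeta {lam : ℝ} (hlam : lam ^ 2 ≤ 1) (x : ℝ) :
    |lam * sin x| ≤ sinZeta lam x :=
  abs_le_sqrt (by nlinarith [sin_sq_add_cos_sq x, sq_nonneg (sin x), sq_nonneg (cos x)])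

lemma abs_costFactor_le {lam : ℝ} (hlam : lam ^ 2 ≤ 1) (x : ℝ) : |costFactor lam x| ≤ 8 := by
  obtain ⟨hlo, hhi⟩ := abs_le.1 (abs_mul_sin_le_sinZeta hlam x)
  have hσ1 := sinZeta_le_one lam x
  rcases (sinZeta_nonneg lam x).eq_or_lt with hσ | hσ
  · simp [costFactor, ← hσ]
  have hu : 0 ≤ sinSum lam x := by rw [sinSum]; linarith
  rw [costFactor, abs_of_nonneg (by positivity), div_le_iff₀ hσ]
  have hu2 : sinSum lam x ≤ 2 * sinZeta lam x := by rw [sinSum]; linarith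
  calc sinSum lam x ^ 3 ≤ (2 * sinZeta lam x) ^ 3 := by gcongr
    _ ≤ 8 * sinZeta lam x := by nlinarith [mul_le_mul_of_nonneg_left hσ1 hσ.le]

@[fun_prop]
lemma continuous_sinZeta (lam : ℝ) : Continuous (sinZeta lam) :=
  continuous_sqrt.comp (by fun_prop)

@[fun_prop]
lemma continuous_sinSum (lam : ℝ) : Continuous (sinSum lam) := by
  unfold sinSum; fun_prop

lemma intervalIntegrable_costFactor {lam : ℝ} (hlam : lam ^ 2 ≤ 1) (a b : ℝ) :
    IntervalIntegrable (costFactor lam) volume a b := by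
  rw [intervalIntegrable_iff]
  refine Measure.integrableOn_of_bounded measure_Ioc_lt_top.ne ?_
    (ae_of_all _ fun x => (abs_costFactor_le hlam x : _))
  exact (((continuous_sinSum lam).pow 3).measurable.div
    (continuous_sinZeta lam).measurable).aestronglyMeasurable

lemma hasDerivAt_sinZeta {lam x : ℝ} (hσ : sinZeta lam x ≠ 0) :
    HasDerivAt (sinZeta lam) (lam ^ 2 * sin x * cos x / sinZeta lam x) x := by
  have hinner : HasDerivAt (fun y => 1 - lam ^ 2 * cos y ^ 2) (2 * lam ^ 2 * sin x * cos x) x :=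
    ((((hasDerivAt_cos x).pow 2).const_mul (lam ^ 2)).const_sub 1).congr_deriv (by ring)
  refine (hinner.sqrt fun h => hσ (by rw [sinZeta, h, sqrt_zero])).congr_deriv ?_
  rw [← sinZeta]
  field_simp

lemma hasDerivAt_sinSum {lam x : ℝ} (hσ : sinZeta lam x ≠ 0) :
    HasDerivAt (sinSum lam) (lam * cos x * sinSum lam x / sinZeta lam x) x := by
  refine (((hasDerivAt_sin x).const_mul lam).add (hasDerivAt_sinZeta hσ)).congr_deriv ?_
  rw [sinSum]
  field_simp
  ring

lemma integral_costFactor_mul_eq_sub {lam : ℝ} (hlam : lam ^ 2 ≤ 1) {F g : ℝ → ℝ}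
    (hF : Continuous F) (hg : Continuous g)
    (hd : ∀ x, sinZeta lam x ≠ 0 → HasDerivAt F (costFactor lam x * g x) x) :
    ∫ x in -(π/2)..π/2, costFactor lam x * g x = F (π/2) - F (-(π/2)) := by
  refine integral_eq_of_hasDerivAt_off_countable_of_le _ _ (by linarith [pi_pos])
    (countable_singleton 0) hF.continuousOn (fun x hx => hd x (sinZeta_ne_zero hlam ?_))
    ((intervalIntegrable_costFactor hlam _ _).mul_continuousOn hg.continuousOn)
  obtain ⟨⟨hlo, hhi⟩, hx0⟩ := hx
  rw [Ne, sin_eq_zero_iff_of_lt_of_lt (by linarith [pi_pos]) (by linarith [pi_pos])]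
  exact hx0

/- These primitives are polynomials in `u = sinSum lam x` because `u · (sin ζ - λ sin x) = 1 - λ²`
expresses `sin x` rationally in `u`. -/
noncomputable def primT (lam x : ℝ) : ℝ := sinSum lam x ^ 3 * cos x ^ 3 / 4

noncomputable def primL (lam x : ℝ) : ℝ :=
  sin x ^ 3 * sinSum lam x ^ 3 / 4 - 3 * sinSum lam x ^ 4 / (16 * lam)

lemma hasDerivAt_primT {lam x : ℝ} (hσ : sinZeta lam x ≠ 0) :
    HasDerivAt (primT lam)
      (costFactor lam x * (3 / 4 * cos x ^ 2 * (lam * cos x ^ 2 - sinZeta lam x * sin x))) x := by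
  refine ((((hasDerivAt_sinSum hσ).pow 3).mul ((hasDerivAt_cos x).pow 3)).div_const 4)
    |>.congr_deriv ?_
  rw [costFactor, Pi.pow_apply, Pi.pow_apply]
  field_simp
  ring

lemma hasDerivAt_primL {lam x : ℝ} (hlam : lam ≠ 0) (hσ : sinZeta lam x ≠ 0) :
    HasDerivAt (primL lam) (costFactor lam x * (-(3 / 4) * cos x ^ 3 * sinSum lam x)) x := by
  have hu := hasDerivAt_sinSum hσ
  refine (((((hasDerivAt_sin x).pow 3).mul (hu.pow 3)).div_const 4).sub
    (((hu.pow 4).const_mul 3).div_const (16 * lam))).congr_deriv ?_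
  rw [costFactor, Pi.pow_apply, Pi.pow_apply]
  field_simp
  have hu_def : sinSum lam x = lam * sin x + sinZeta lam x := rfl
  linear_combination (-48 * cos x * sinSum lam x ^ 3 * sin x ^ 2) * hu_def
    + 48 * cos x * sinSum lam x ^ 4 * sin_sq_add_cos_sq x

lemma sinZeta_pi_div_two (lam : ℝ) : sinZeta lam (π/2) = 1 := by
  simp [sinZeta]

lemma sinZeta_neg_pi_div_two (lam : ℝ) : sinZeta lam (-(π/2)) = 1 := by
  simp [sinZeta]

lemma integral_costFactor_transversal {lam : ℝ} (hlam : lam ^ 2 ≤ 1) :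
    ∫ x in -(π/2)..π/2,
      costFactor lam x * (3 / 4 * cos x ^ 2 * (lam * cos x ^ 2 - sinZeta lam x * sin x)) = 0 := by
  rw [integral_costFactor_mul_eq_sub hlam (F := primT lam) (by unfold primT; fun_prop) (by fun_prop)
    fun x hσ => hasDerivAt_primT hσ]
  simp [primT]

lemma integral_costFactor_longitudinal {lam : ℝ} (hlam0 : lam ≠ 0) (hlam : lam ^ 2 ≤ 1) :
    ∫ x in -(π/2)..π/2, costFactor lam x * (-(3 / 4) * cos x ^ 3 * sinSum lam x) = -1 := by
  rw [integral_costFactor_mul_eq_sub hlam (F := primL lam) (by unfold primL; fun_prop) (by fun_prop)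
    fun x hσ => hasDerivAt_primL hlam0 hσ]
  simp only [primL, sinSum, sinZeta_pi_div_two, sinZeta_neg_pi_div_two, sin_pi_div_two, sin_neg]
  field_simp
  ring

theorem stmt_7 (lam : ℝ) (h0 : 0 < lam) (h1 : lam ≤ 1) :
    (∫ p, cT lam p ∂nuZero) = 0 ∧ (∫ p, cL lam p ∂nuZero) = -1 := by
  have hlam : lam ^ 2 ≤ 1 := by nlinarith
  have hcos : ∀ x ∈ uIcc (-(π/2)) (π/2), 0 ≤ lam * cos x ∧ lam * cos x ≤ 1 := fun x hx => by
    rw [uIcc_of_le (by linarith [pi_pos])] at hx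
    have := cos_nonneg_of_mem_Icc hx
    exact ⟨by positivity, by nlinarith [cos_le_one x]⟩
  rw [integral_nuZero, integral_nuZero,
    integral_congr fun x hx => cos_mul_cT_diag (hcos x hx).1 (hcos x hx).2,
    integral_congr fun x hx => cos_mul_cL_diag (hcos x hx).1 (hcos x hx).2]
  exact ⟨integral_costFactor_transversal hlam, integral_costFactor_longitudinal h0.ne' hlam⟩
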